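/- Let G = (V, E), V = {v_1, …, v_p}, and let A_1 be the binary automaton with layers L_i = {v^{(i)}_j, u^{(i)}_j : 1 ≤ j ≤ p} (1 ≤ i ≤ p), where δ(v^{(i)}_j, 0) = u^{(i)}_j if i = j and v^{(i+1)}_j otherwise; δ(v^{(i)}_j, 1) = u^{(i)}_j if v_i v_j ∈ E and v^{(i+1)}_j otherwise; states u^{(i)}_j have self-loops on both letters; v^{(p+1)}_j all coincide with a state f that begins a p-state cycle on both letters. Then for every independent set I of G, the word w of length p whose i-th letter is 1 if v_i ∈ I and 0 otherwise maps every state in { v^{(1)}_j : v_j ∈ I } to f. -/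
import Mathlib

def deltaStar {Q A : Type*} (δ : Q → A → Q) (q : Q) (w : List A) : Q :=
  w.foldl δ q

def IsSyncSet {Q A : Type*} (δ : Q → A → Q) (S : Set Q) : Prop :=
  ∃ (w : List A) (q : Q), ∀ s ∈ S, deltaStar δ s w = q

/-- States of the binary automaton A₁ built from a graph on p vertices:
layered states v i j (layer i, index j), absorbing states u i j, and a
p-state cycle c k whose state c 0 plays the role of f. -/
inductive St1 (p : ℕ) : Type where
  | v : Fin p → Fin p → St1 p
  | u : Fin p → Fin p → St1 p
  | c : Fin p → St1 p
deriving DecidableEq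

/-- Transitions of A₁ over the binary alphabet {0 = false, 1 = true}:
v i j goes to u i j on 0 iff i = j, and on 1 iff v_i v_j ∈ E; otherwise it
moves to the next layer (or to f = c 0 from the last layer); u-states have
self-loops; the c-states form a cycle on both letters. -/
def delta1 {p : ℕ} (G : SimpleGraph (Fin p)) [DecidableRel G.Adj] :
    St1 p → Bool → St1 p
  | St1.v i j, b =>
      if (b = false ∧ i = j) ∨ (b = true ∧ G.Adj i j) then St1.u i j
      else if h : i.val + 1 < p then St1.v ⟨i.val + 1, h⟩ j else St1.c ⟨0, i.pos⟩
  | St1.u i j, _ => St1.u i j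
  | St1.c k, _ => St1.c ⟨(k.val + 1) % p, Nat.mod_lt _ k.pos⟩

lemma aux12 {p : ℕ} (G : SimpleGraph (Fin p)) [DecidableRel G.Adj]
    (hp : 0 < p) (I : Finset (Fin p))
    (hI : (I : Set (Fin p)).Pairwise (fun a b => ¬ G.Adj a b))
    (j : Fin p) (hj : j ∈ I) :
    ∀ m k (hk : k < p), p - k = m →
      deltaStar (delta1 G) (St1.v ⟨k, hk⟩ j)
        (((List.finRange p).drop k).map (fun i => decide (i ∈ I))) = St1.c ⟨0, hp⟩ := by
  intro m
  induction m with
  | zero => intro k hk hm; omega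
  | succ n ih =>
    intro k hk hm
    have hlen : k < (List.finRange p).length := by simpa using hk
    rw [List.drop_eq_getElem_cons hlen, List.getElem_finRange]
    simp only [List.map_cons, deltaStar, List.foldl_cons]
    have hcast : (Fin.cast (by simp) (⟨k, hlen⟩ : Fin (List.finRange p).length) : Fin p) = ⟨k, hk⟩ := rfl
    rw [hcast]
    have hcond : ¬ ((decide ((⟨k, hk⟩ : Fin p) ∈ I) = false ∧ (⟨k, hk⟩ : Fin p) = j)
        ∨ (decide ((⟨k, hk⟩ : Fin p) ∈ I) = true ∧ G.Adj ⟨k, hk⟩ j)) := by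
      rintro (⟨h1, h2⟩ | ⟨h1, h2⟩)
      · rw [h2] at h1; simp [hj] at h1
      · have hk' : (⟨k, hk⟩ : Fin p) ∈ I := by simpa using h1
        exact hI hk' hj (G.ne_of_adj h2) h2
    rw [show delta1 G (St1.v ⟨k, hk⟩ j) (decide ((⟨k, hk⟩ : Fin p) ∈ I))
        = if h : k + 1 < p then St1.v ⟨k + 1, h⟩ j else St1.c ⟨0, hp⟩ by
      simp only [delta1, if_neg hcond]]
    by_cases h : k + 1 < p
    · rw [dif_pos h]
      exact ih (k+1) h (by omega)
    · rw [dif_neg h]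
      have : (List.finRange p).drop (k+1) = [] := by
        apply List.drop_eq_nil_of_le; simp; omega
      rw [this]
      rfl

/-- For every independent set I of G, the word of length p whose i-th letter
is 1 iff v_i ∈ I maps every first-layer state v^{(1)}_j with v_j ∈ I to f. -/
theorem stmt_12 {p : ℕ} (G : SimpleGraph (Fin p)) [DecidableRel G.Adj]
    (hp : 0 < p) (I : Finset (Fin p))
    (hI : (I : Set (Fin p)).Pairwise (fun a b => ¬ G.Adj a b)) :
    ∀ j ∈ I, deltaStar (delta1 G) (St1.v ⟨0, hp⟩ j)
        ((List.finRange p).map (fun i => decide (i ∈ I))) = St1.c ⟨0, hp⟩ := by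
  intro j hj
  have := aux12 G hp I hI j hj p 0 hp (by omega)
  simpa using this
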